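/- For any weighted-envy-freeable allocation A, the minimal envy-eliminating subsidy vector s*_i = w_i · ℓ_i(A) has at least one agent i with s*_i = 0. -/

import Mathlib

/-!
Let `p` be a maximal-cost path from some agent and `j` its last vertex. Appending to `p` any
path from `j` gives a walk; since no cycle has positive cost, cutting out its closed sub-walks
turns it into a path from the same start without lowering the cost, so `ℓ j ≤ 0`. The trivial
path `[j]` gives `0 ≤ ℓ j`.
-/

/-- Sum of edge costs along the consecutive pairs of a list (a directed path). -/
noncomputable def pathCost {n : ℕ} (c : Fin n → Fin n → ℝ) (p : List (Fin n)) : ℝ :=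
  ((p.zip p.tail).map fun q => c q.1 q.2).sum

/-- Sum of edge costs along a cycle `i₁,…,i_r,i₁`. -/
noncomputable def cycleCost {n : ℕ} (c : Fin n → Fin n → ℝ) (p : List (Fin n)) : ℝ :=
  ((p.zip (p.rotate 1)).map fun q => c q.1 q.2).sum

/-- Weighted envy edge cost without subsidies. -/
noncomputable def envyCost {n : ℕ} (v : Fin n → Fin n → ℝ) (w : Fin n → ℝ) (i j : Fin n) : ℝ :=
  v i j / w j - v i i / w i

/-- Weighted envy edge cost with subsidy vector `s`. -/
noncomputable def envyCostS {n : ℕ} (v : Fin n → Fin n → ℝ) (w : Fin n → ℝ) (s : Fin n → ℝ)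
    (i j : Fin n) : ℝ :=
  (v i j + s j) / w j - (v i i + s i) / w i

/-- `(A,s)` is weighted-envy-free. -/
def IsWEF {n : ℕ} (v : Fin n → Fin n → ℝ) (w : Fin n → ℝ) (s : Fin n → ℝ) : Prop :=
  ∀ i j, (v i j + s j) / w j ≤ (v i i + s i) / w i

/-- The set of costs of (vertex-distinct) directed paths starting at `i`. -/
noncomputable def pathCostsFrom {n : ℕ} (c : Fin n → Fin n → ℝ) (i : Fin n) : Set ℝ :=
  {x | ∃ p : List (Fin n), p ≠ [] ∧ p.Nodup ∧ p.head? = some i ∧ pathCost c p = x}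

theorem List.exists_eq_append_cons_append_cons_of_not_nodup {α : Type*} {l : List α}
    (h : ¬l.Nodup) : ∃ s x m t, l = s ++ x :: (m ++ x :: t) := by
  induction l with
  | nil => exact absurd List.nodup_nil h
  | cons a l ih =>
    by_cases ha : a ∈ l
    · obtain ⟨m, t, rfl⟩ := List.append_of_mem ha
      exact ⟨[], a, m, t, rfl⟩
    · obtain ⟨s, x, m, t, rfl⟩ := ih fun hl => h (List.nodup_cons.2 ⟨ha, hl⟩)
      exact ⟨a :: s, x, m, t, rfl⟩

section PathCost

variable {n : ℕ} (c : Fin n → Fin n → ℝ)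

@[simp]
theorem pathCost_singleton (a : Fin n) : pathCost c [a] = 0 := by
  simp [pathCost]

@[simp]
theorem pathCost_cons_cons (a b : Fin n) (l : List (Fin n)) :
    pathCost c (a :: b :: l) = c a b + pathCost c (b :: l) := by
  simp [pathCost]

theorem pathCost_append_cons :
    ∀ (l : List (Fin n)) (x : Fin n) (m : List (Fin n)),
      pathCost c (l ++ x :: m) = pathCost c (l ++ [x]) + pathCost c (x :: m)
  | [], _, _ => by simp
  | [_], _, _ => by simp
  | a :: b :: l, x, m => by
    have ih := pathCost_append_cons (b :: l) x m
    simp only [List.cons_append] at ih ⊢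
    rw [pathCost_cons_cons, pathCost_cons_cons, ih]
    ring

theorem cycleCost_cons (x : Fin n) (m : List (Fin n)) :
    cycleCost c (x :: m) = pathCost c (x :: m ++ [x]) := by
  have hzip : (x :: m ++ [x]).zip (m ++ [x]) = (x :: m).zip (m ++ [x]) := by
    simpa using List.zip_append (l₁ := x :: m) (r₁ := [x]) (l₂ := m ++ [x]) (r₂ := [])
      (by simp)
  simp only [cycleCost, pathCost, List.rotate_cons_succ, List.rotate_zero, List.tail_cons,
    List.cons_append] at hzip ⊢
  rw [hzip]

variable {c}

theorem pathCost_le_erase_cycle (hcyc : ∀ p : List (Fin n), p ≠ [] → cycleCost c p ≤ 0)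
    (s : List (Fin n)) (x : Fin n) (m t : List (Fin n)) :
    pathCost c (s ++ x :: (m ++ x :: t)) ≤ pathCost c (s ++ x :: t) := by
  have hsplit : pathCost c (x :: (m ++ x :: t)) = cycleCost c (x :: m) + pathCost c (x :: t) := by
    rw [cycleCost_cons, ← pathCost_append_cons, List.cons_append]
  rw [pathCost_append_cons, pathCost_append_cons c s x t, hsplit]
  linarith [hcyc (x :: m) (List.cons_ne_nil _ _)]

theorem pathCost_le_of_mem_upperBounds_pathCostsFrom
    (hcyc : ∀ p : List (Fin n), p ≠ [] → cycleCost c p ≤ 0)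
    {i : Fin n} {b : ℝ} (hb : b ∈ upperBounds (pathCostsFrom c i)) :
    ∀ p : List (Fin n), p.head? = some i → pathCost c p ≤ b := by
  intro p
  induction hlen : p.length using Nat.strong_induction_on generalizing p with
  | _ k ih =>
    intro hp
    by_cases hnd : p.Nodup
    · exact hb ⟨p, by rintro rfl; simp at hp, hnd, hp, rfl⟩
    obtain ⟨s, x, m, t, rfl⟩ := List.exists_eq_append_cons_append_cons_of_not_nodup hnd
    refine (pathCost_le_erase_cycle hcyc s x m t).trans (ih _ ?_ _ rfl ?_)
    · subst hlen; simp
    · cases s <;> simpa using hp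

end PathCost

theorem exists_agent_zero_subsidy_general {n : ℕ} (hn : 0 < n)
    (w : Fin n → ℝ)
    (v : Fin n → Fin n → ℝ)
    (hcyc : ∀ c : List (Fin n), c ≠ [] → cycleCost (envyCost v w) c ≤ 0)
    (ℓ : Fin n → ℝ) (hℓ : ∀ i, IsGreatest (pathCostsFrom (envyCost v w) i) (ℓ i)) :
    ∃ i, w i * ℓ i = 0 := by
  obtain ⟨p, hp, -, hp₀, hpℓ⟩ := (hℓ ⟨0, hn⟩).1
  obtain ⟨l, j, rfl⟩ : ∃ l j, p = l ++ [j] := by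
    simpa using (List.eq_nil_or_concat p).resolve_left hp
  refine ⟨j, ?_⟩
  have hj_nonneg : 0 ≤ ℓ j := (hℓ j).2 ⟨[j], by simp, by simp, rfl, pathCost_singleton _ _⟩
  obtain ⟨q, -, -, hqj, hqℓ⟩ := (hℓ j).1
  obtain ⟨q, rfl⟩ := List.head?_eq_some_iff.1 hqj
  have hwalk : pathCost (envyCost v w) (l ++ j :: q) ≤ ℓ ⟨0, hn⟩ :=
    pathCost_le_of_mem_upperBounds_pathCostsFrom hcyc (hℓ _).2 _ (by cases l <;> simpa using hp₀)
  rw [pathCost_append_cons, hpℓ, hqℓ] at hwalk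
  rw [le_antisymm (by linarith) hj_nonneg, mul_zero]

/-- For a WEF-able allocation (no positive-cost cycles), at least one agent
requires zero subsidy in the minimal subsidy vector `s* i = w i * ℓ i`. -/
theorem exists_agent_zero_subsidy {n : ℕ} (hn : 0 < n)
    (w : Fin n → ℝ) (hw : ∀ i, 0 < w i)
    (v : Fin n → Fin n → ℝ) (hv : ∀ i j, 0 ≤ v i j)
    (hcyc : ∀ c : List (Fin n), c ≠ [] → cycleCost (envyCost v w) c ≤ 0)
    (ℓ : Fin n → ℝ) (hℓ : ∀ i, IsGreatest (pathCostsFrom (envyCost v w) i) (ℓ i)) :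
    ∃ i, w i * ℓ i = 0 :=
  exists_agent_zero_subsidy_general hn w v hcyc ℓ hℓ
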